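/- Let Y be a closed subspace of a Banach space X. Then for every nonempty finite subset F = {x₁,…,xₙ} of X, the restricted Chebyshev radius of F with respect to the closed unit ball of Y equals the restricted Chebyshev radius of F (viewed in X**) with respect to the closed unit ball of Y⊥⊥: rad_{B_{Y⊥⊥}}(F) = rad_{B_Y}(F). -/

import Mathlib

open Metric Set Pointwise

/-- `r(x,B) = sup_{b ∈ B} ‖x - b‖`. -/
noncomputable def chebR {X : Type*} [NormedAddCommGroup X] (x : X) (B : Set X) : ℝ :=
  ⨆ b : B, ‖x - (b : X)‖

/-- `rad_V(B) = inf_{v ∈ V} r(v,B)`, the restricted Chebyshev radius. -/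
noncomputable def chebRad {X : Type*} [NormedAddCommGroup X] (V B : Set X) : ℝ :=
  ⨅ v : V, chebR (v : X) B

/-- `cent_V(B)`, the set of restricted Chebyshev centers of `B` w.r.t. `V`. -/
noncomputable def chebCent {X : Type*} [NormedAddCommGroup X] (V B : Set X) : Set X :=
  {v ∈ V | chebR v B ≤ chebRad V B}

/-- `cent_V(B,δ) = {v ∈ V : r(v,B) ≤ rad_V(B) + δ}`. -/
noncomputable def chebCentA {X : Type*} [NormedAddCommGroup X] (V B : Set X) (δ : ℝ) : Set X :=
  {v ∈ V | chebR v B ≤ chebRad V B + δ}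

open NormedSpace in
/-- The double annihilator `Y⊥⊥` of `Y`, as a subset of the bidual `X**`. -/
def biann {X : Type*} [NormedAddCommGroup X] [NormedSpace ℝ X] (Y : Submodule ℝ X) :
    Set (StrongDual ℝ (StrongDual ℝ X)) :=
  {Φ | ∀ f : StrongDual ℝ X, (∀ y ∈ Y, f y = 0) → Φ f = 0}

/-!
The embedding `X → X**` is an isometry mapping `B_Y` into `B_{Y⊥⊥}`, which gives `≤`.
Conversely, if `r < rad_{B_Y}(F)`, the convex set `{(y - x)_{x ∈ F} : y ∈ B_Y}` misses the open
`r`-ball of the sup-normed product `X^F`, so Hahn–Banach separation yields `g : F → X*` with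
`∑ ‖g x‖ ≤ 1` and `r ≤ ∑ g x (y - x)` on `B_Y`. Thus `h = ∑ g x` is `≥ r + ∑ g x x` on `B_Y`,
i.e. `‖h|_Y‖ ≤ -(r + ∑ g x x)`. A norm-preserving extension of `h|_Y` differs from `h` by an
element of `Y⊥`, so every `Φ ∈ B_{Y⊥⊥}` also has `Φ h ≥ r + ∑ g x x`, that is,
`r ≤ ∑ (Φ - x)(g x) ≤ r(Φ, F)`. No local reflexivity is needed.
-/

section ChebyshevRadius

variable {X Z : Type*} [NormedAddCommGroup X] [NormedAddCommGroup Z]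

lemma chebR_nonneg (x : X) (B : Set X) : 0 ≤ chebR x B :=
  Real.iSup_nonneg fun _ => norm_nonneg _

lemma norm_sub_le_chebR {B : Set X} (hB : Bornology.IsBounded B) (x : X) {b : X} (hb : b ∈ B) :
    ‖x - b‖ ≤ chebR x B := by
  obtain ⟨C, hC⟩ := hB.exists_norm_le
  refine le_ciSup (f := fun b : B => ‖x - (b : X)‖) ⟨‖x‖ + C, ?_⟩ ⟨b, hb⟩
  rintro _ ⟨c, rfl⟩
  exact (norm_sub_le _ _).trans (by gcongr; exact hC c c.2)

lemma chebR_image_of_isometry {f : X → Z} (hf : Isometry f) (x : X) (B : Set X) :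
    chebR (f x) (f '' B) = chebR x B := by
  unfold chebR iSup
  congr 1
  ext r
  simp only [Set.mem_range, Subtype.exists, Set.mem_image, exists_prop]
  constructor
  · rintro ⟨_, ⟨b, hb, rfl⟩, rfl⟩
    exact ⟨b, hb, by rw [← dist_eq_norm, ← dist_eq_norm, hf.dist_eq]⟩
  · rintro ⟨b, hb, rfl⟩
    exact ⟨f b, ⟨b, hb, rfl⟩, by rw [← dist_eq_norm, ← dist_eq_norm, hf.dist_eq]⟩

lemma chebR_le_norm_pi (x : X) (B : Set X) [Fintype B] : chebR x B ≤ ‖fun b : B => x - b‖ :=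
  Real.iSup_le (fun b => norm_le_pi_norm (fun b : B => x - b) b) (norm_nonneg _)

lemma chebRad_le_chebR {V : Set X} {x : X} (hx : x ∈ V) (B : Set X) :
    chebRad V B ≤ chebR x B :=
  ciInf_le ⟨0, by rintro _ ⟨v, rfl⟩; exact chebR_nonneg _ _⟩ (⟨x, hx⟩ : V)

lemma le_chebRad {V B : Set X} {r : ℝ} (hV : V.Nonempty) (h : ∀ v ∈ V, r ≤ chebR v B) :
    r ≤ chebRad V B :=
  have := hV.to_subtype
  le_ciInf fun v => h v v.2

end ChebyshevRadius

section Duality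

variable {E : Type*} [NormedAddCommGroup E] [NormedSpace ℝ E]

lemma exists_norm_le_one_le_apply_sub_of_disjoint_ball {C : Set E} (hC : Convex ℝ C) {p : E}
    {r : ℝ} (hr : 0 < r) (hdisj : Disjoint (ball p r) C) :
    ∃ G : StrongDual ℝ E, ‖G‖ ≤ 1 ∧ ∀ c ∈ C, r ≤ G (c - p) := by
  obtain ⟨f, u, hball, hC⟩ := geometric_hahn_banach_open (convex_ball p r) isOpen_ball hC hdisj
  set v := u - f p
  have hball₀ : ∀ z ∈ ball (0 : E) r, f z < v := fun z hz => by
    have := hball (p + z) (by simpa using hz)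
    rw [map_add] at this
    linarith
  have hv : 0 < v := by simpa using hball₀ 0 (mem_ball_self hr)
  have hclosedBall : ∀ z ∈ closedBall (0 : E) r, f z ≤ v := by
    rw [← closure_ball _ hr.ne']
    exact closure_minimal (fun z hz => (hball₀ z hz).le) (isClosed_le f.continuous continuous_const)
  have hf : ‖f‖ ≤ v / r := by
    refine ContinuousLinearMap.opNorm_bound_of_ball_bound hr v f fun z hz => ?_
    have := hclosedBall (-z) (by simpa using hz)
    rw [map_neg] at this
    exact abs_le.2 ⟨by linarith, hclosedBall z hz⟩
  refine ⟨(r / v) • f, ?_, fun c hc => ?_⟩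
  · rw [norm_smul, Real.norm_of_nonneg (by positivity)]
    calc r / v * ‖f‖ ≤ r / v * (v / r) := by gcongr
      _ = 1 := by field_simp
  · rw [smul_apply, smul_eq_mul, map_sub]
    calc r = r / v * v := by field_simp
      _ ≤ r / v * (f c - f p) := by gcongr; linarith [hC c hc]

lemma ContinuousLinearMap.exists_norm_le_one_lt_apply (g : E →L[ℝ] ℝ) {c : ℝ} (hc : c < ‖g‖) :
    ∃ u : E, ‖u‖ ≤ 1 ∧ c < g u := by
  obtain ⟨u, hu, hcu⟩ := g.exists_lt_apply_of_lt_opNorm hc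
  rcases le_or_gt 0 (g u) with hpos | hneg
  · exact ⟨u, hu.le, by rwa [Real.norm_of_nonneg hpos] at hcu⟩
  · exact ⟨-u, by simpa using hu.le, by rwa [Real.norm_eq_abs, abs_of_neg hneg, ← map_neg] at hcu⟩

lemma sum_norm_comp_single_le {ι : Type*} [Fintype ι] [DecidableEq ι]
    (G : StrongDual ℝ (ι → E)) :
    ∑ i, ‖G.comp (ContinuousLinearMap.single ℝ (fun _ => E) i)‖ ≤ ‖G‖ := by
  set g := fun i => G.comp (ContinuousLinearMap.single ℝ (fun _ => E) i)
  refine le_of_forall_pos_le_add fun ε hε => ?_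
  set δ := ε / (Fintype.card ι + 1)
  have hδ : Fintype.card ι * δ ≤ ε := by
    rw [mul_div_assoc']
    exact div_le_of_le_mul₀ (by positivity) hε.le (by linarith)
  choose u hu hgu using fun i => (g i).exists_norm_le_one_lt_apply
    (sub_lt_self ‖g i‖ (by positivity : 0 < δ))
  have hGu : G u = ∑ i, g i (u i) := by
    conv_lhs => rw [← Finset.univ_sum_single u]
    simp [g]
  have hGu_le : G u ≤ ‖G‖ := by
    simpa using (Real.le_norm_self _).trans
      (G.le_opNorm_of_le ((pi_norm_le_iff_of_nonneg zero_le_one).2 hu))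
  calc ∑ i, ‖g i‖ = ∑ i, (‖g i‖ - δ) + Fintype.card ι * δ := by simp
    _ ≤ G u + ε := by
        rw [hGu]
        gcongr with i
        exact (hgu i).le
    _ ≤ ‖G‖ + ε := by gcongr

lemma exists_sum_norm_le_one_le_sum_apply_sub {ι : Type*} [Fintype ι] {C : Set E}
    (hC : Convex ℝ C) (x : ι → E) {r : ℝ} (hr : 0 < r) (hfar : ∀ y ∈ C, r ≤ ‖fun i => y - x i‖) :
    ∃ g : ι → StrongDual ℝ E, ∑ i, ‖g i‖ ≤ 1 ∧ ∀ y ∈ C, r ≤ ∑ i, g i (y - x i) := by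
  classical
  set diag : E →ₗ[ℝ] ι → E := LinearMap.pi fun _ => LinearMap.id
  have hdisj : Disjoint (ball x r) (diag '' C) := by
    refine Set.disjoint_left.2 fun z hz => ?_
    rintro ⟨y, hy, rfl⟩
    rw [mem_ball, dist_eq_norm] at hz
    exact (hfar y hy).not_gt hz
  obtain ⟨G, hG, hGC⟩ :=
    exists_norm_le_one_le_apply_sub_of_disjoint_ball (hC.linear_image diag) hr hdisj
  refine ⟨fun i => G.comp (ContinuousLinearMap.single ℝ (fun _ => E) i),
    (sum_norm_comp_single_le G).trans hG, fun y hy => ?_⟩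
  have := hGC _ ⟨y, hy, rfl⟩
  rwa [← Finset.univ_sum_single (diag y - x), map_sum] at this

end Duality

section Biannihilator

open NormedSpace

variable {X : Type*} [NormedAddCommGroup X] [NormedSpace ℝ X] {Y : Submodule ℝ X}

lemma inclusionInDoubleDual_mem_biann {y : X} (hy : y ∈ Y) :
    inclusionInDoubleDual ℝ X y ∈ biann Y :=
  fun _ hf => hf y hy

lemma apply_eq_of_mem_biann {Φ : StrongDual ℝ (StrongDual ℝ X)} (hΦ : Φ ∈ biann Y)
    {f h : StrongDual ℝ X} (hfh : ∀ y ∈ Y, f y = h y) : Φ f = Φ h :=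
  sub_eq_zero.1 <| by
    rw [← map_sub]
    exact hΦ _ fun y hy => by rw [sub_apply, hfh y hy, sub_self]

lemma norm_comp_subtypeL_le_of_forall_le_apply {h : StrongDual ℝ X} {a : ℝ}
    (ha : ∀ y ∈ Y, ‖y‖ ≤ 1 → a ≤ h y) : ‖h.comp Y.subtypeL‖ ≤ -a := by
  have hbound : ∀ z ∈ closedBall (0 : Y) 1, ‖h.comp Y.subtypeL z‖ ≤ -a := fun z hz => by
    have hz : ‖(z : X)‖ ≤ 1 := by simpa using hz
    have h₁ := ha z z.2 hz
    have h₂ := ha (-z) (Y.neg_mem z.2) (by simpa using hz)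
    rw [map_neg] at h₂
    change ‖h z‖ ≤ -a
    rw [Real.norm_eq_abs, abs_le]
    constructor <;> linarith
  simpa using ContinuousLinearMap.opNorm_bound_of_ball_bound one_pos (-a) _ hbound

lemma le_apply_of_mem_biann {Φ : StrongDual ℝ (StrongDual ℝ X)} (hΦ : Φ ∈ biann Y)
    (hΦ₁ : ‖Φ‖ ≤ 1) {h : StrongDual ℝ X} {a : ℝ} (ha : ∀ y ∈ Y, ‖y‖ ≤ 1 → a ≤ h y) :
    a ≤ Φ h := by
  obtain ⟨f, hf, hfn⟩ := exists_extension_norm_eq Y (h.comp Y.subtypeL)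
  have hfΦ : Φ f = Φ h := apply_eq_of_mem_biann hΦ fun y hy => by simpa using hf ⟨y, hy⟩
  have hfa : ‖f‖ ≤ -a := hfn ▸ norm_comp_subtypeL_le_of_forall_le_apply ha
  have hΦf : ‖Φ f‖ ≤ -a :=
    (Φ.le_opNorm f).trans ((mul_le_of_le_one_left (norm_nonneg f) hΦ₁).trans hfa)
  rw [← hfΦ]
  linarith [neg_abs_le (Φ f), Real.norm_eq_abs (Φ f)]

end Biannihilator

section ChebyshevRadiusBidual

open NormedSpace

variable {X : Type*} [NormedAddCommGroup X] [NormedSpace ℝ X] (Y : Submodule ℝ X)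

lemma chebRad_biann_le (F : Set X) :
    chebRad (biann Y ∩ closedBall 0 1) (inclusionInDoubleDual ℝ X '' F)
      ≤ chebRad ((Y : Set X) ∩ closedBall 0 1) F := by
  refine le_chebRad (V := (Y : Set X) ∩ closedBall 0 1) ⟨0, Y.zero_mem,
    mem_closedBall_self zero_le_one⟩ fun y ⟨hy, hy₁⟩ => ?_
  have hJy : inclusionInDoubleDual ℝ X y ∈ biann Y ∩ closedBall 0 1 := by
    refine ⟨inclusionInDoubleDual_mem_biann hy, ?_⟩
    rw [mem_closedBall_zero_iff (E := StrongDual ℝ (StrongDual ℝ X))]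
    exact ((inclusionInDoubleDualLi ℝ).norm_map y).trans_le (by simpa using hy₁)
  calc _ ≤ chebR (inclusionInDoubleDual ℝ X y) (inclusionInDoubleDual ℝ X '' F) :=
        chebRad_le_chebR hJy _
    _ = chebR y F := chebR_image_of_isometry (inclusionInDoubleDualLi ℝ).isometry y F

lemma chebRad_le_chebR_of_mem_biann {F : Set X} (hF : F.Finite)
    {Φ : StrongDual ℝ (StrongDual ℝ X)} (hΦ : Φ ∈ biann Y) (hΦ₁ : ‖Φ‖ ≤ 1) :
    chebRad ((Y : Set X) ∩ closedBall 0 1) F ≤ chebR Φ (inclusionInDoubleDual ℝ X '' F) := by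
  have := hF.fintype
  refine le_of_forall_lt_imp_le_of_dense fun r hr => ?_
  rcases le_or_gt r 0 with hr0 | hr0
  · exact hr0.trans (chebR_nonneg _ _)
  obtain ⟨g, hg₁, hg⟩ := exists_sum_norm_le_one_le_sum_apply_sub
    (Y.convex.inter (convex_closedBall 0 1)) (fun b : F => (b : X)) hr0
    fun y hy => hr.le.trans ((chebRad_le_chebR hy F).trans (chebR_le_norm_pi y F))
  have hΦg : r + ∑ b, g b b ≤ Φ (∑ b, g b) := le_apply_of_mem_biann hΦ hΦ₁ fun y hy hy₁ => by
    have := hg y ⟨hy, by simpa using hy₁⟩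
    simp only [map_sub, Finset.sum_sub_distrib] at this
    simp only [sum_apply]
    linarith
  set ρ := chebR Φ (inclusionInDoubleDual ℝ X '' F)
  calc r ≤ ∑ b : F, (Φ - inclusionInDoubleDual ℝ X b) (g b) := by
        simp only [sub_apply, Finset.sum_sub_distrib, dual_def, ← map_sum]
        linarith
    _ ≤ ∑ b : F, ρ * ‖g b‖ := Finset.sum_le_sum fun b _ => by
        refine (Real.le_norm_self _).trans (((Φ - _).le_opNorm (g b)).trans ?_)
        gcongr
        exact norm_sub_le_chebR (hF.image _).isBounded Φ (mem_image_of_mem _ b.2)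
    _ ≤ ρ := by
        rw [← Finset.mul_sum]
        exact mul_le_of_le_one_right (chebR_nonneg _ _) hg₁

end ChebyshevRadiusBidual

open NormedSpace in
theorem stmt_8_general {X : Type*} [NormedAddCommGroup X] [NormedSpace ℝ X]
    (Y : Submodule ℝ X)
    (F : Set X) (hFfin : F.Finite) :
    chebRad (biann Y ∩ closedBall 0 1) (inclusionInDoubleDual ℝ X '' F)
      = chebRad ((Y : Set X) ∩ closedBall 0 1) F := by
  refine le_antisymm (chebRad_biann_le Y F) ?_
  refine le_chebRad (V := biann Y ∩ closedBall 0 1) ⟨0, fun _ _ => rfl,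
    mem_closedBall_self zero_le_one⟩ fun Φ ⟨hΦ, hΦ₁⟩ => ?_
  exact chebRad_le_chebR_of_mem_biann Y hFfin hΦ
    ((mem_closedBall_zero_iff (E := StrongDual ℝ (StrongDual ℝ X))).1 hΦ₁)

open NormedSpace in
/-- for finite `F ⊆ X`, `rad_{B_{Y⊥⊥}}(F) = rad_{B_Y}(F)`. -/
theorem stmt_8 {X : Type*} [NormedAddCommGroup X] [NormedSpace ℝ X] [CompleteSpace X]
    (Y : Submodule ℝ X) (hYc : IsClosed (Y : Set X))
    (F : Set X) (hFne : F.Nonempty) (hFfin : F.Finite) :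
    chebRad (biann Y ∩ closedBall 0 1) (inclusionInDoubleDual ℝ X '' F)
      = chebRad ((Y : Set X) ∩ closedBall 0 1) F :=
  stmt_8_general Y F hFfin
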